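/- Let (𝒮, 𝒜, P*, r, H) be a finite-horizon MDP with global Q*-gap gap* > 0, and let (P̃, r̃) satisfy, for all (s,a) and all h with 0 ≤ h ≤ H−2, ‖P̃_h(·|s,a) − P*_h(·|s,a)‖₁ ≤ gap*/(2H(H−h−1)) and |r̃_h(s,a) − r_h(s,a)| ≤ gap*/(4H), with r̃_{H−1} = r_{H−1}. Let π̃ be any deterministic Markov policy that is optimal for (P̃,r̃) at every state and horizon. Then for every (s,h), every a* ∈ A*_h(s), and every a ∉ A*_h(s): Q_h^{π̃,P̃,r̃}(s,a*) − Q_h^{π̃,P̃,r̃}(s,a) ≥ gap*·(h+1)/H > 0. -/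

import Mathlib

/-- A probability mass function on a finite type, as a real-valued function. -/
def IsPMF {S : Type*} [Fintype S] (p : S → ℝ) : Prop :=
  (∀ s, 0 ≤ p s) ∧ ∑ s, p s = 1

/-- ℓ₁ distance between two functions on a finite type. -/
noncomputable def l1dist {S : Type*} [Fintype S] (p q : S → ℝ) : ℝ :=
  ∑ s, |p s - q s|

/-- Value function of a deterministic Markov policy, by backward recursion on the
number `t` of remaining steps; the value at stage `h` with horizon `H` is
`Vpi P r pol (H - h) h`. -/
noncomputable def Vpi {S A : Type*} [Fintype S]
    (P : ℕ → S → A → S → ℝ) (r : ℕ → S → A → ℝ) (pol : ℕ → S → A) :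
    ℕ → ℕ → S → ℝ
  | 0, _, _ => 0
  | t + 1, h, s =>
      r h s (pol h s) + ∑ s' : S, P h s (pol h s) s' * Vpi P r pol t (h + 1) s'

/-- Action-value function of a deterministic Markov policy in the horizon-`H` MDP. -/
noncomputable def Qpi {S A : Type*} [Fintype S]
    (P : ℕ → S → A → S → ℝ) (r : ℕ → S → A → ℝ) (pol : ℕ → S → A)
    (H h : ℕ) (s : S) (a : A) : ℝ :=
  r h s a + ∑ s' : S, P h s a s' * Vpi P r pol (H - (h + 1)) (h + 1) s'

/-- Optimal value function: supremum over all deterministic Markov policies. -/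
noncomputable def Vstar {S A : Type*} [Fintype S]
    (P : ℕ → S → A → S → ℝ) (r : ℕ → S → A → ℝ) (H h : ℕ) (s : S) : ℝ :=
  ⨆ pol : ℕ → S → A, Vpi P r pol (H - h) h s

/-- Optimal action-value function. -/
noncomputable def Qstar {S A : Type*} [Fintype S]
    (P : ℕ → S → A → S → ℝ) (r : ℕ → S → A → ℝ) (H h : ℕ) (s : S) (a : A) : ℝ :=
  r h s a + ∑ s' : S, P h s a s' * Vstar P r H (h + 1) s'

/-- The set of optimal actions `A*_h(s) = argmax_a Q*_h(s,a)`. -/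
def OptActions {S A : Type*} [Fintype S]
    (P : ℕ → S → A → S → ℝ) (r : ℕ → S → A → ℝ) (H h : ℕ) (s : S) : Set A :=
  {a | ∀ a', Qstar P r H h s a' ≤ Qstar P r H h s a}

/-! Write `δ_h` for the largest distance between the optimal action-values of the perturbed and
the true MDP at stage `h`. Optimal values are maxima of optimal action-values, so they are
`δ_{h+1}`-close at stage `h + 1`; the perturbed ones lie in `[0, H - h - 1]`, so centring them at
the midpoint bounds the effect of the transition error by `‖P̃ - P*‖₁ (H - h - 1) / 2 ≤ gap*/(4H)`.
With the reward error this gives `δ_h ≤ δ_{h+1} + gap*/(2H)` and `δ_{H-1} = 0`, hence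
`δ_h ≤ (H - 1 - h) gap*/(2H)`. A policy optimal for `(P̃, r̃)` has `Q^{π̃} = Q̃*`, so the gap
`gap*` between `a*` and `a` under `Q*` shrinks by at most `2 δ_h`, leaving `gap* (h + 1) / H`. -/

open Finset Set

section Expectation

variable {S : Type*} [Fintype S] {p q V W : S → ℝ}

lemma IsPMF.sum_mul_mem_Icc (hp : IsPMF p) {M : ℝ} (hV : ∀ s, V s ∈ Icc 0 M) :
    ∑ s, p s * V s ∈ Icc 0 M := by
  refine ⟨sum_nonneg fun s _ => mul_nonneg (hp.1 s) (hV s).1, ?_⟩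
  calc ∑ s, p s * V s ≤ ∑ s, p s * M :=
        sum_le_sum fun s _ => mul_le_mul_of_nonneg_left (hV s).2 (hp.1 s)
    _ = M := by rw [← sum_mul, hp.2, one_mul]

lemma IsPMF.abs_sum_mul_sub_sum_mul_le (hp : IsPMF p) {d : ℝ} (hVW : ∀ s, |V s - W s| ≤ d) :
    |∑ s, p s * V s - ∑ s, p s * W s| ≤ d := by
  rw [← sum_sub_distrib]
  calc |∑ s, (p s * V s - p s * W s)| ≤ ∑ s, p s * |V s - W s| := by
        refine (abs_sum_le_sum_abs _ _).trans_eq (sum_congr rfl fun s _ => ?_)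
        rw [← mul_sub, abs_mul, abs_of_nonneg (hp.1 s)]
    _ ≤ ∑ s, p s * d := sum_le_sum fun s _ => mul_le_mul_of_nonneg_left (hVW s) (hp.1 s)
    _ = d := by rw [← sum_mul, hp.2, one_mul]

/- Since `p - q` has total mass zero, `V` may be replaced by `V - M / 2`, whose absolute value
is at most `M / 2`. -/
lemma abs_sum_sub_mul_le_l1dist_mul (hpq : ∑ s, p s = ∑ s, q s) {M : ℝ}
    (hV : ∀ s, V s ∈ Icc 0 M) :
    |∑ s, (p s - q s) * V s| ≤ l1dist p q * (M / 2) := by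
  have hcenter : ∑ s, (p s - q s) * V s = ∑ s, (p s - q s) * (V s - M / 2) := by
    have hzero : ∑ s, (p s - q s) * (M / 2) = 0 := by
      rw [← sum_mul, sum_sub_distrib, hpq, sub_self, zero_mul]
    simp only [mul_sub, sum_sub_distrib (f := fun s => (p s - q s) * V s), hzero, sub_zero]
  rw [hcenter, l1dist, sum_mul]
  refine (abs_sum_le_sum_abs _ _).trans (sum_le_sum fun s _ => ?_)
  rw [abs_mul]
  exact mul_le_mul_of_nonneg_left
    (abs_le.2 ⟨by linarith [(hV s).1], by linarith [(hV s).2]⟩) (abs_nonneg _)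

lemma IsPMF.abs_sum_mul_sub_sum_mul_le_l1dist (hp : IsPMF p) (hq : IsPMF q) {M d : ℝ}
    (hV : ∀ s, V s ∈ Icc 0 M) (hVW : ∀ s, |V s - W s| ≤ d) :
    |∑ s, p s * V s - ∑ s, q s * W s| ≤ l1dist p q * (M / 2) + d := by
  have hsplit : ∑ s, p s * V s - ∑ s, q s * W s
      = ∑ s, (p s - q s) * V s + (∑ s, q s * V s - ∑ s, q s * W s) := by
    simp only [sub_mul, sum_sub_distrib]; ring
  rw [hsplit]
  exact (abs_add_le _ _).trans <| add_le_add
    (abs_sum_sub_mul_le_l1dist_mul (by rw [hp.2, hq.2]) hV) (hq.abs_sum_mul_sub_sum_mul_le hVW)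

end Expectation

lemma ciSup_eq_of_forall_le {ι : Type*} [Finite ι] {f : ι → ℝ} {j : ι} (h : ∀ i, f i ≤ f j) :
    ⨆ i, f i = f j :=
  le_antisymm (haveI : Nonempty ι := ⟨j⟩; ciSup_le h) (le_ciSup (finite_range f).bddAbove j)

lemma abs_ciSup_sub_ciSup_le {ι : Type*} [Finite ι] [Nonempty ι] {f g : ι → ℝ} {d : ℝ}
    (h : ∀ i, |f i - g i| ≤ d) : |(⨆ i, f i) - ⨆ i, g i| ≤ d := by
  rw [abs_sub_le_iff, sub_le_iff_le_add, sub_le_iff_le_add]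
  constructor
  · refine ciSup_le fun i => ?_
    linarith [(abs_le.1 (h i)).2, le_ciSup (finite_range g).bddAbove i]
  · refine ciSup_le fun i => ?_
    linarith [(abs_le.1 (h i)).1, le_ciSup (finite_range f).bddAbove i]

section Bellman

variable {S A : Type*} [Fintype S] (P : ℕ → S → A → S → ℝ) (r : ℕ → S → A → ℝ)

/-- Optimal value with `t` steps to go from stage `h`, indexed like `Vpi`. -/
noncomputable def optValue : ℕ → ℕ → S → ℝ
  | 0, _, _ => 0
  | t + 1, h, s => ⨆ a, r h s a + ∑ s', P h s a s' * optValue t (h + 1) s'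

noncomputable def optPolicy [Finite A] [Nonempty A] (H : ℕ) (h : ℕ) (s : S) : A :=
  (Finite.exists_max fun a =>
    r h s a + ∑ s', P h s a s' * optValue P r (H - (h + 1)) (h + 1) s').choose

variable {P r}

lemma Vpi_le_optValue [Finite A] {H : ℕ} (hP : ∀ h, h + 1 < H → ∀ s a s', 0 ≤ P h s a s')
    (pol : ℕ → S → A) : ∀ t h, h + t ≤ H → ∀ s, Vpi P r pol t h s ≤ optValue P r t h s
  | 0, _, _, _ => by simp [Vpi, optValue]
  | t + 1, h, hht, s => by
    have hnext : ∀ s', P h s (pol h s) s' * Vpi P r pol t (h + 1) s'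
        ≤ P h s (pol h s) s' * optValue P r t (h + 1) s' := fun s' => by
      rcases Nat.eq_zero_or_pos t with rfl | ht
      · simp [Vpi, optValue]
      · exact mul_le_mul_of_nonneg_left (Vpi_le_optValue hP pol t (h + 1) (by omega) s')
          (hP h (by omega) s _ s')
    calc Vpi P r pol (t + 1) h s
        ≤ r h s (pol h s) + ∑ s', P h s (pol h s) s' * optValue P r t (h + 1) s' :=
          add_le_add le_rfl (sum_le_sum fun s' _ => hnext s')
      _ ≤ optValue P r (t + 1) h s :=
          le_ciSup (f := fun a => r h s a + ∑ s', P h s a s' * optValue P r t (h + 1) s')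
            (finite_range _).bddAbove (pol h s)

lemma Vpi_optPolicy [Finite A] [Nonempty A] {H : ℕ} :
    ∀ t h, h + t = H → ∀ s, Vpi P r (optPolicy P r H) t h s = optValue P r t h s
  | 0, _, _, _ => rfl
  | t + 1, h, hht, s => by
    have hmax : ∀ a, r h s a + ∑ s', P h s a s' * optValue P r (H - (h + 1)) (h + 1) s'
        ≤ r h s (optPolicy P r H h s)
          + ∑ s', P h s (optPolicy P r H h s) s' * optValue P r (H - (h + 1)) (h + 1) s' :=
      (Finite.exists_max _).choose_spec
    rw [show H - (h + 1) = t by omega] at hmax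
    simp only [Vpi, optValue, Vpi_optPolicy (H := H) t (h + 1) (by omega)]
    exact (ciSup_eq_of_forall_le hmax).symm

lemma Vstar_eq_optValue [Finite A] [Nonempty A] {H h : ℕ}
    (hP : ∀ h, h + 1 < H → ∀ s a s', 0 ≤ P h s a s') (hh : h ≤ H) (s : S) :
    Vstar P r H h s = optValue P r (H - h) h s := by
  have hle := fun pol => Vpi_le_optValue (r := r) hP pol (H - h) h (by omega) s
  refine le_antisymm (ciSup_le hle) ?_
  rw [← Vpi_optPolicy (H := H) (H - h) h (by omega) s]
  exact le_ciSup ⟨_, forall_mem_range.2 hle⟩ (optPolicy P r H)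

lemma Vstar_of_le {H h : ℕ} (hh : H ≤ h) (s : S) : Vstar P r H h s = 0 := by
  simp [Vstar, Nat.sub_eq_zero_of_le hh, Vpi, Real.iSup_const_zero]

lemma Vstar_eq_iSup_Qstar [Finite A] [Nonempty A] {H h : ℕ}
    (hP : ∀ h, h + 1 < H → ∀ s a s', 0 ≤ P h s a s') (hh : h < H) (s : S) :
    Vstar P r H h s = ⨆ a, Qstar P r H h s a := by
  rw [Vstar_eq_optValue hP hh.le, show H - h = H - (h + 1) + 1 by omega]
  simp only [optValue, Qstar, Vstar_eq_optValue hP (Nat.succ_le_of_lt hh)]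

lemma Vpi_mem_Icc {H : ℕ} (hP : ∀ h, h + 1 < H → ∀ s a, IsPMF (P h s a))
    (hr : ∀ h, h < H → ∀ s a, r h s a ∈ Icc (0 : ℝ) 1) (pol : ℕ → S → A) :
    ∀ t h, h + t ≤ H → ∀ s, Vpi P r pol t h s ∈ Icc (0 : ℝ) t
  | 0, _, _, _ => by simp [Vpi]
  | t + 1, h, hht, s => by
    have hnext : ∑ s', P h s (pol h s) s' * Vpi P r pol t (h + 1) s' ∈ Icc (0 : ℝ) t := by
      rcases Nat.eq_zero_or_pos t with rfl | ht
      · simp [Vpi]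
      · exact (hP h (by omega) s _).sum_mul_mem_Icc
          (Vpi_mem_Icc hP hr pol t (h + 1) (by omega))
    obtain ⟨hr0, hr1⟩ := hr h (by omega) s (pol h s)
    rw [Vpi, Nat.cast_succ]
    exact ⟨by linarith [hnext.1], by linarith [hnext.2]⟩

lemma Vstar_mem_Icc [Finite A] [Nonempty A] {H h : ℕ}
    (hP : ∀ h, h + 1 < H → ∀ s a, IsPMF (P h s a))
    (hr : ∀ h, h < H → ∀ s a, r h s a ∈ Icc (0 : ℝ) 1) (hh : h ≤ H) (s : S) :
    Vstar P r H h s ∈ Icc (0 : ℝ) (H - h : ℕ) := by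
  rw [Vstar_eq_optValue (fun h hh s a => (hP h hh s a).1) hh,
    ← Vpi_optPolicy (H := H) (H - h) h (by omega) s]
  exact Vpi_mem_Icc hP hr _ _ _ (by omega) s

lemma Qpi_eq_Qstar {pol : ℕ → S → A} {H : ℕ}
    (hopt : ∀ h, h < H → ∀ s, Vpi P r pol (H - h) h s = Vstar P r H h s)
    (h : ℕ) (s : S) (a : A) : Qpi P r pol H h s a = Qstar P r H h s a := by
  simp only [Qpi, Qstar]
  congr 2 with s'
  rcases lt_or_ge (h + 1) H with hlt | hge
  · rw [hopt (h + 1) hlt s']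
  · rw [Nat.sub_eq_zero_of_le hge, Vstar_of_le hge, Vpi]

end Bellman

/-- Each remaining step adds `ε` through the rewards and `ε` through the transitions. -/
lemma abs_Qstar_sub_Qstar_le {S A : Type*} [Fintype S] [Finite A] [Nonempty A]
    {P P' : ℕ → S → A → S → ℝ} {r r' : ℕ → S → A → ℝ} {H : ℕ} {ε : ℝ}
    (hP : ∀ h, h + 1 < H → ∀ s a, IsPMF (P h s a))
    (hP' : ∀ h, h + 1 < H → ∀ s a, IsPMF (P' h s a))
    (hr' : ∀ h, h < H → ∀ s a, r' h s a ∈ Icc (0 : ℝ) 1)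
    (hPclose : ∀ h, h + 1 < H → ∀ s a,
      l1dist (P' h s a) (P h s a) ≤ 2 * ε / ((H : ℝ) - h - 1))
    (hrclose : ∀ h, h + 1 < H → ∀ s a, |r' h s a - r h s a| ≤ ε)
    (hrlast : ∀ s a, r' (H - 1) s a = r (H - 1) s a) :
    ∀ t h, h + t + 1 = H → ∀ s a, |Qstar P' r' H h s a - Qstar P r H h s a| ≤ 2 * ε * t
  | 0, h, hht, s, a => by
    have hlast := hrlast s a
    rw [show H - 1 = h by omega] at hlast
    simp [Qstar, Vstar_of_le (show H ≤ h + 1 by omega), hlast]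
  | t + 1, h, hht, s, a => by
    have hPnn : ∀ k, k + 1 < H → ∀ s a s', 0 ≤ P k s a s' := fun k hk s a => (hP k hk s a).1
    have hP'nn : ∀ k, k + 1 < H → ∀ s a s', 0 ≤ P' k s a s' := fun k hk s a => (hP' k hk s a).1
    have hV' : ∀ s', Vstar P' r' H (h + 1) s' ∈ Icc (0 : ℝ) (t + 1) := fun s' => by
      simpa [show H - (h + 1) = t + 1 by omega] using
        Vstar_mem_Icc hP' hr' (show h + 1 ≤ H by omega) s'
    have hVV : ∀ s', |Vstar P' r' H (h + 1) s' - Vstar P r H (h + 1) s'| ≤ 2 * ε * t := by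
      intro s'
      rw [Vstar_eq_iSup_Qstar hP'nn (by omega), Vstar_eq_iSup_Qstar hPnn (by omega)]
      exact abs_ciSup_sub_ciSup_le fun a' =>
        abs_Qstar_sub_Qstar_le hP hP' hr' hPclose hrclose hrlast t (h + 1) (by omega) s' a'
    have hl1 : l1dist (P' h s a) (P h s a) * ((t + 1) / 2) ≤ ε := by
      have hM : (H : ℝ) - h - 1 = t + 1 := by rw [← hht]; push_cast; ring
      calc l1dist (P' h s a) (P h s a) * ((t + 1) / 2)
          ≤ 2 * ε / (t + 1) * ((t + 1) / 2) := by
            refine mul_le_mul_of_nonneg_right ?_ (by positivity)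
            rw [← hM]; exact hPclose h (by omega) s a
        _ = ε := by field_simp
    have hnext := (hP' h (by omega) s a).abs_sum_mul_sub_sum_mul_le_l1dist
      (hP h (by omega) s a) hV' hVV
    calc |Qstar P' r' H h s a - Qstar P r H h s a|
        = |(r' h s a - r h s a) + (∑ s', P' h s a s' * Vstar P' r' H (h + 1) s'
            - ∑ s', P h s a s' * Vstar P r H (h + 1) s')| := by simp only [Qstar]; ring_nf
      _ ≤ ε + (ε + 2 * ε * t) :=
          (abs_add_le _ _).trans (add_le_add (hrclose h (by omega) s a) (by linarith))
      _ = 2 * ε * ↑(t + 1) := by push_cast; ring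

theorem perturbed_Q_gap_lower_bound_general
    {𝒮 𝒜 : Type*} [Fintype 𝒮] [Fintype 𝒜] [Nonempty 𝒜]
    (H : ℕ)
    (Pstar : ℕ → 𝒮 → 𝒜 → 𝒮 → ℝ) (r : ℕ → 𝒮 → 𝒜 → ℝ)
    (Pt : ℕ → 𝒮 → 𝒜 → 𝒮 → ℝ) (rt : ℕ → 𝒮 → 𝒜 → ℝ)
    (hPstar : ∀ h, h + 1 < H → ∀ s a, IsPMF (Pstar h s a))
    (hPt : ∀ h, h + 1 < H → ∀ s a, IsPMF (Pt h s a))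
    (hrt : ∀ h, h < H → ∀ s a, rt h s a ∈ Set.Icc (0 : ℝ) 1)
    (gapstar : ℝ) (hgap_pos : 0 < gapstar)
    (hgap : ∀ h, h < H → ∀ s a, a ∉ OptActions Pstar r H h s →
      gapstar ≤ (⨆ a', Qstar Pstar r H h s a') - Qstar Pstar r H h s a)
    (hPclose : ∀ h, h + 1 < H → ∀ s a,
      l1dist (Pt h s a) (Pstar h s a) ≤ gapstar / (2 * H * ((H : ℝ) - h - 1)))
    (hrclose : ∀ h, h + 1 < H → ∀ s a,
      |rt h s a - r h s a| ≤ gapstar / (4 * H))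
    (hrlast : ∀ s a, rt (H - 1) s a = r (H - 1) s a)
    (polt : ℕ → 𝒮 → 𝒜)
    (hopt : ∀ h, h < H → ∀ s, Vpi Pt rt polt (H - h) h s = Vstar Pt rt H h s) :
    ∀ h, h < H → ∀ s, ∀ astar ∈ OptActions Pstar r H h s,
      ∀ a, a ∉ OptActions Pstar r H h s →
        gapstar * ((h : ℝ) + 1) / H
            ≤ Qpi Pt rt polt H h s astar - Qpi Pt rt polt H h s a ∧
          0 < gapstar * ((h : ℝ) + 1) / H := by
  intro h hh s astar hastar a ha
  obtain ⟨t, ht⟩ : ∃ t, h + t + 1 = H := ⟨H - h - 1, by omega⟩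
  have hHt : (H : ℝ) = h + t + 1 := by rw [← ht]; push_cast; ring
  have hclose := abs_Qstar_sub_Qstar_le (ε := gapstar / (4 * H)) hPstar hPt hrt
    (fun k hk s a => (hPclose k hk s a).trans_eq (by rw [← div_div]; ring)) hrclose hrlast t h ht s
  have hgap_at := hgap h hh s a ha
  rw [ciSup_eq_of_forall_le hastar] at hgap_at
  rw [Qpi_eq_Qstar hopt, Qpi_eq_Qstar hopt]
  refine ⟨?_, by rw [hHt]; positivity⟩
  have hbound :
      gapstar * ((h : ℝ) + 1) / H = gapstar - 2 * (2 * (gapstar / (4 * H)) * t) := by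
    rw [hHt]; field_simp; ring
  linarith [abs_le.1 (hclose astar), abs_le.1 (hclose a)]

/-- gap preservation under perturbation.
For any policy optimal for the perturbed MDP `(P̃, r̃)` at every state and horizon,
the perturbed action-values still separate optimal from suboptimal actions of the
true MDP by at least `gap*·(h+1)/H > 0`. -/
theorem perturbed_Q_gap_lower_bound
    {𝒮 𝒜 : Type*} [Fintype 𝒮] [Fintype 𝒜] [Nonempty 𝒮] [Nonempty 𝒜]
    (H : ℕ) (hH : 1 ≤ H)
    (Pstar : ℕ → 𝒮 → 𝒜 → 𝒮 → ℝ) (r : ℕ → 𝒮 → 𝒜 → ℝ)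
    (Pt : ℕ → 𝒮 → 𝒜 → 𝒮 → ℝ) (rt : ℕ → 𝒮 → 𝒜 → ℝ)
    (hPstar : ∀ h, h + 1 < H → ∀ s a, IsPMF (Pstar h s a))
    (hPt : ∀ h, h + 1 < H → ∀ s a, IsPMF (Pt h s a))
    (hr : ∀ h, h < H → ∀ s a, r h s a ∈ Set.Icc (0 : ℝ) 1)
    (hrt : ∀ h, h < H → ∀ s a, rt h s a ∈ Set.Icc (0 : ℝ) 1)
    (gapstar : ℝ) (hgap_pos : 0 < gapstar)
    (hgap : ∀ h, h < H → ∀ s a, a ∉ OptActions Pstar r H h s →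
      gapstar ≤ (⨆ a', Qstar Pstar r H h s a') - Qstar Pstar r H h s a)
    (hPclose : ∀ h, h + 1 < H → ∀ s a,
      l1dist (Pt h s a) (Pstar h s a) ≤ gapstar / (2 * H * ((H : ℝ) - h - 1)))
    (hrclose : ∀ h, h + 1 < H → ∀ s a,
      |rt h s a - r h s a| ≤ gapstar / (4 * H))
    (hrlast : ∀ s a, rt (H - 1) s a = r (H - 1) s a)
    (polt : ℕ → 𝒮 → 𝒜)
    (hopt : ∀ h, h < H → ∀ s, Vpi Pt rt polt (H - h) h s = Vstar Pt rt H h s) :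
    ∀ h, h < H → ∀ s, ∀ astar ∈ OptActions Pstar r H h s,
      ∀ a, a ∉ OptActions Pstar r H h s →
        gapstar * ((h : ℝ) + 1) / H
            ≤ Qpi Pt rt polt H h s astar - Qpi Pt rt polt H h s a ∧
          0 < gapstar * ((h : ℝ) + 1) / H :=
  perturbed_Q_gap_lower_bound_general H Pstar r Pt rt hPstar hPt hrt gapstar hgap_pos hgap hPclose
    hrclose hrlast polt hopt
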